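/- arXiv:1412.6361 — 2 statements merged into one kernel-verified Lean document; each statement's English description precedes it below -/
import Mathlib

section
/- In rock-paper-scissors with randomization charge ε, for every ε ≥ 0 and all actions a, b ∈ Fin 3, the pure-strategy profile (δ_a, δ_b) is not a Nash equilibrium. -/
open scoped Classical

/-- A mixed strategy over the three actions of rock-paper-scissors. -/
def IsMixed (σ : Fin 3 → ℝ) : Prop :=
  (∀ a, 0 ≤ σ a) ∧ ∑ a, σ a = 1

/-- A pure (deterministic) strategy: some action gets probability one. -/
def IsPure (σ : Fin 3 → ℝ) : Prop :=
  ∃ a, σ a = 1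

/-- The pure strategy `δ_a` that chooses `a` with probability 1. -/
def delta (a : Fin 3) : Fin 3 → ℝ :=
  fun a' => if a' = a then 1 else 0

/-- The rock-paper-scissors win function: `a` beats `b` iff `a = b + 1`
(addition mod 3). -/
noncomputable def w (a b : Fin 3) : ℝ :=
  if a = b + 1 then 1 else if b = a + 1 then -1 else 0

/-- Player 1's payoff with a charge `ε` for randomization. -/
noncomputable def U₁ (ε : ℝ) (σ₁ σ₂ : Fin 3 → ℝ) : ℝ :=
  (∑ a, ∑ b, σ₁ a * σ₂ b * w a b) - (if IsPure σ₁ then 0 else ε)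

/-- Player 2's payoff with a charge `ε` for randomization. -/
noncomputable def U₂ (ε : ℝ) (σ₁ σ₂ : Fin 3 → ℝ) : ℝ :=
  (∑ a, ∑ b, σ₁ a * σ₂ b * w b a) - (if IsPure σ₂ then 0 else ε)

lemma delta_mixed (x : Fin 3) : IsMixed (delta x) := by
  constructor
  · intro a; unfold delta; split <;> norm_num
  · fin_cases x <;> simp [delta, Fin.sum_univ_three]

lemma delta_pure (x : Fin 3) : IsPure (delta x) := ⟨x, by simp [delta]⟩

lemma sum_delta (x y : Fin 3) : (∑ a, ∑ b, delta x a * delta y b * w a b) = w x y := by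
  fin_cases x <;> fin_cases y <;> simp [delta, Fin.sum_univ_three]

lemma U₁_delta (ε : ℝ) (x y : Fin 3) : U₁ ε (delta x) (delta y) = w x y := by
  simp [U₁, sum_delta, delta_pure]

lemma U₂_delta (ε : ℝ) (x y : Fin 3) : U₂ ε (delta x) (delta y) = w y x := by
  unfold U₂
  rw [if_pos (delta_pure y)]
  have : (∑ a, ∑ b, delta x a * delta y b * w b a) = w y x := by
    simp [delta, Fin.sum_univ_three]
  rw [this]; ring

/-- In rock-paper-scissors with randomization charge `ε ≥ 0`, no
pure-strategy profile `(δ_a, δ_b)` is a Nash equilibrium. -/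
theorem no_pure_nash_equilibrium_rps
    (ε : ℝ) (hε : 0 ≤ ε) (a b : Fin 3) :
    ¬ ((∀ σ₁' : Fin 3 → ℝ, IsMixed σ₁' →
          U₁ ε σ₁' (delta b) ≤ U₁ ε (delta a) (delta b)) ∧
       (∀ σ₂' : Fin 3 → ℝ, IsMixed σ₂' →
          U₂ ε (delta a) σ₂' ≤ U₂ ε (delta a) (delta b))) := by
  rintro ⟨h1, h2⟩
  by_cases hab : a = b + 1
  · -- player 2 deviates to a + 1
    have := h2 (delta (a+1)) (delta_mixed _)
    rw [U₂_delta, U₂_delta] at this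
    have h1' : w (a+1) a = 1 := by fin_cases a <;> simp [w] <;> decide
    have h2' : w b a = -1 := by subst hab; fin_cases b <;> simp [w] <;> decide
    rw [h1', h2'] at this; linarith
  · -- player 1 deviates to b + 1
    have := h1 (delta (b+1)) (delta_mixed _)
    rw [U₁_delta, U₁_delta] at this
    have h1' : w (b+1) b = 1 := by fin_cases b <;> simp [w] <;> decide
    have h2' : w a b ≤ 0 := by
      rw [w, if_neg hab]; split <;> norm_num
    rw [h1'] at this; linarith
end

section
/- For every ε > 0, rock-paper-scissors with randomization charge ε has no Nash equilibrium: there is no profile of mixed strategies (σ₁, σ₂) such that U₁(σ₁', σ₂) ≤ U₁(σ₁, σ₂) for every mixed strategy σ₁' and U₂(σ₁, σ₂') ≤ U₂(σ₁, σ₂) for every mixed strategy σ₂'. -/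
open scoped Classical

noncomputable def RPSdelta (a : Fin 3) : Fin 3 → ℝ := fun b => if b = a then 1 else 0

lemma mixed_delta (a : Fin 3) : IsMixed (RPSdelta a) := by
  constructor
  · intro b; unfold RPSdelta; split <;> norm_num
  · simp [RPSdelta]

lemma pure_delta (a : Fin 3) : IsPure (RPSdelta a) := ⟨a, by simp [RPSdelta]⟩

lemma U1_delta (ε : ℝ) (σ₂ : Fin 3 → ℝ) (x : Fin 3) :
    U₁ ε (RPSdelta x) σ₂ = ∑ b, σ₂ b * w x b := by
  unfold U₁
  rw [if_pos (pure_delta x), sub_zero]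
  simp [RPSdelta, ite_mul, Finset.sum_ite_eq']

lemma U2_delta (ε : ℝ) (σ₁ : Fin 3 → ℝ) (x : Fin 3) :
    U₂ ε σ₁ (RPSdelta x) = ∑ a, σ₁ a * w x a := by
  unfold U₂
  rw [if_pos (pure_delta x), sub_zero]
  simp [RPSdelta, mul_ite, ite_mul, Finset.sum_ite_eq']

lemma eq_delta {σ : Fin 3 → ℝ} (h : IsMixed σ) {a : Fin 3} (ha : σ a = 1) :
    σ = RPSdelta a := by
  obtain ⟨hnn, hsum⟩ := h
  have herase : ∑ x ∈ Finset.univ.erase a, σ x = 0 := by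
    have := Finset.add_sum_erase Finset.univ σ (Finset.mem_univ a)
    rw [hsum, ha] at this; linarith
  funext c
  by_cases hc : c = a
  · simp [RPSdelta, hc, ha]
  · have : σ c = 0 := by
      have := (Finset.sum_eq_zero_iff_of_nonneg (fun x _ => hnn x)).mp herase c
        (by simp [hc])
      exact this
    simp [RPSdelta, hc, this]

/-- In equilibrium, a player's strategy must be pure. -/
lemma pure_of_best₁ {ε : ℝ} (hε : 0 < ε) {σ₁ σ₂ : Fin 3 → ℝ} (h₁ : IsMixed σ₁)
    (hb : ∀ σ₁' : Fin 3 → ℝ, IsMixed σ₁' → U₁ ε σ₁' σ₂ ≤ U₁ ε σ₁ σ₂) :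
    IsPure σ₁ := by
  by_contra hp
  set v : Fin 3 → ℝ := fun a => ∑ b, σ₂ b * w a b with hv
  obtain ⟨x, -, hx⟩ := Finset.exists_max_image (Finset.univ : Finset (Fin 3)) v
    ⟨0, Finset.mem_univ 0⟩
  have hU : U₁ ε σ₁ σ₂ = (∑ a, σ₁ a * v a) - ε := by
    unfold U₁
    rw [if_neg hp]
    congr 1
    refine Finset.sum_congr rfl fun a _ => ?_
    rw [hv, Finset.mul_sum]
    exact Finset.sum_congr rfl fun b _ => by ring
  have hle : ∑ a, σ₁ a * v a ≤ v x := by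
    calc ∑ a, σ₁ a * v a ≤ ∑ a, σ₁ a * v x :=
          Finset.sum_le_sum fun a _ =>
            mul_le_mul_of_nonneg_left (hx a (Finset.mem_univ a)) (h₁.1 a)
      _ = v x := by rw [← Finset.sum_mul, h₁.2, one_mul]
  have := hb (RPSdelta x) (mixed_delta x)
  rw [U1_delta, hU] at this
  have : v x ≤ v x - ε := le_trans this (by linarith)
  linarith

lemma pure_of_best₂ {ε : ℝ} (hε : 0 < ε) {σ₁ σ₂ : Fin 3 → ℝ} (h₂ : IsMixed σ₂)
    (hb : ∀ σ₂' : Fin 3 → ℝ, IsMixed σ₂' → U₂ ε σ₁ σ₂' ≤ U₂ ε σ₁ σ₂) :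
    IsPure σ₂ := by
  by_contra hp
  set v : Fin 3 → ℝ := fun b => ∑ a, σ₁ a * w b a with hv
  obtain ⟨x, -, hx⟩ := Finset.exists_max_image (Finset.univ : Finset (Fin 3)) v
    ⟨0, Finset.mem_univ 0⟩
  have hU : U₂ ε σ₁ σ₂ = (∑ b, σ₂ b * v b) - ε := by
    unfold U₂
    rw [if_neg hp]
    congr 1
    rw [Finset.sum_comm]
    refine Finset.sum_congr rfl fun b _ => ?_
    rw [hv, Finset.mul_sum]
    exact Finset.sum_congr rfl fun a _ => by ring
  have hle : ∑ b, σ₂ b * v b ≤ v x := by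
    calc ∑ b, σ₂ b * v b ≤ ∑ b, σ₂ b * v x :=
          Finset.sum_le_sum fun b _ =>
            mul_le_mul_of_nonneg_left (hx b (Finset.mem_univ b)) (h₂.1 b)
      _ = v x := by rw [← Finset.sum_mul, h₂.2, one_mul]
  have := hb (RPSdelta x) (mixed_delta x)
  rw [U2_delta, hU] at this
  have : v x ≤ v x - ε := le_trans this (by linarith)
  linarith

/-- For every `ε > 0`, rock-paper-scissors with randomization
charge `ε` has no Nash equilibrium. -/
theorem no_nash_equilibrium_rps (ε : ℝ) (hε : 0 < ε) :
    ¬ ∃ σ₁ σ₂ : Fin 3 → ℝ, IsMixed σ₁ ∧ IsMixed σ₂ ∧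
      (∀ σ₁' : Fin 3 → ℝ, IsMixed σ₁' → U₁ ε σ₁' σ₂ ≤ U₁ ε σ₁ σ₂) ∧
      (∀ σ₂' : Fin 3 → ℝ, IsMixed σ₂' → U₂ ε σ₁ σ₂' ≤ U₂ ε σ₁ σ₂) := by
  rintro ⟨σ₁, σ₂, h₁, h₂, hb₁, hb₂⟩
  obtain ⟨a, ha⟩ := pure_of_best₁ hε h₁ hb₁
  obtain ⟨b, hbb⟩ := pure_of_best₂ hε h₂ hb₂
  have e₁ : σ₁ = RPSdelta a := eq_delta h₁ ha
  have e₂ : σ₂ = RPSdelta b := eq_delta h₂ hbb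
  subst e₁; subst e₂
  -- Player 1 deviates to δ (b+1), player 2 to δ (a+1)
  have k₁ := hb₁ (RPSdelta (b + 1)) (mixed_delta _)
  have k₂ := hb₂ (RPSdelta (a + 1)) (mixed_delta _)
  rw [U1_delta] at k₁
  rw [U2_delta] at k₂
  have hU1 : U₁ ε (RPSdelta a) (RPSdelta b) = w a b := by
    rw [U1_delta]; simp [RPSdelta, mul_ite, Finset.sum_ite_eq']
  have hU2 : U₂ ε (RPSdelta a) (RPSdelta b) = w b a := by
    rw [U2_delta]; simp [RPSdelta, ite_mul, Finset.sum_ite_eq']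
  rw [hU1] at k₁
  rw [hU2] at k₂
  have s₁ : (∑ c, RPSdelta b c * w (b + 1) c) = 1 := by
    simp only [RPSdelta, ite_mul, one_mul, zero_mul, Finset.sum_ite_eq']
    simp [w]
  have s₂ : (∑ c, RPSdelta a c * w (a + 1) c) = 1 := by
    simp only [RPSdelta, ite_mul, one_mul, zero_mul, Finset.sum_ite_eq']
    simp [w]
  rw [s₁] at k₁; rw [s₂] at k₂
  -- so w a b ≥ 1 and w b a ≥ 1
  have hab : a = b + 1 := by
    by_contra h
    unfold w at k₁
    rw [if_neg h] at k₁
    split at k₁ <;> linarith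
  have hba : b = a + 1 := by
    by_contra h
    unfold w at k₂
    rw [if_neg h] at k₂
    split at k₂ <;> linarith
  rw [hba] at hab
  omega
end
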